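/- Let B₁ and B₂ be two complex Banach spaces carrying complex cones 𝒞₁ and 𝒞₂ arising from the real/complex cone setup (each with its own S, 𝕖, 𝕞, κ). Let L : B₁ → B₂ be a bounded complex-linear operator with L(𝒞₁) ⊂ 𝒞₂ and set Δ = sup_{x,y ∈ 𝒞₁} δ_{𝒞₂}(Lx, Ly). If Δ < ∞, then for all h, g ∈ 𝒞₁, δ_{𝒞₂}(Lh, Lg) ≤ tanh(Δ/4) · δ_{𝒞₁}(h, g). -/

import Mathlib

/-!
A vector `v` of the complexification on which no functional `±ℓ ± i p` (with `ℓ, p` strictly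
positive on `𝒞_ℝ`) vanishes lies in `𝒞_ℂ`: the values `ℓ(v)` then form a convex cone in `ℂ` of
opening at most `π/2`, which one rotation moves into the closed first quadrant. Hence
`h - ζ g ∈ 𝒞₁` for every `ζ ∉ E_{𝒞₁}(h, g)`.

Ratios `z, w ∈ E_{𝒞₂}(Lh, Lg)` also lie in `E_{𝒞₁}(h, g)`, which is contained in an annulus
`a ≤ |u| ≤ e^{δ_{𝒞₁}(h,g)} a`. Taking `ζ₁` on the ray of `w` just inside the annulus and `ζ₂` on
the ray of `z` just outside it, `δ_{𝒞₂}(L(h - ζ₁ g), L(h - ζ₂ g)) ≤ Δ` bounds the cross ratio of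
`a < |w| ≤ |z| < b`, i.e. their Hilbert distance in `(a, b)`, and Birkhoff's estimate on an
interval gives `log (|z| / |w|) ≤ tanh (Δ / 4) log (b / a)`.
-/

open Complex Set ENNReal

namespace ConeSetup

variable {B : Type*} [NormedAddCommGroup B] [NormedSpace ℝ B]

/-- Complex scalar multiplication on the complexification `B × B`:
`(a+ib)(x,y) = (ax − by, ay + bx)`. -/
def cSmul (z : ℂ) (p : B × B) : B × B :=
  (z.re • p.1 - z.im • p.2, z.re • p.2 + z.im • p.1)

/-- The "real" norm `‖(x,y)‖_r = √(‖x‖² + ‖y‖²)` on the complexification. -/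
noncomputable def rNorm (p : B × B) : ℝ :=
  Real.sqrt (‖p.1‖ ^ 2 + ‖p.2‖ ^ 2)

/-- The complexification norm `‖(x,y)‖ = sup_{θ∈[0,2π]} ‖e^{iθ}(x,y)‖_r`. -/
noncomputable def cNorm (p : B × B) : ℝ :=
  sSup ((fun θ : ℝ => rNorm (cSmul (Complex.exp (θ * Complex.I)) p)) ''
    Set.Icc 0 (2 * Real.pi))

/-- The real cone `𝒞_ℝ = {h ≠ 0 : ℓ(h) ≥ 0 for all ℓ ∈ S}`. -/
def realCone (S : Set (B →L[ℝ] ℝ)) : Set B :=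
  {h | h ≠ 0 ∧ ∀ ℓ ∈ S, 0 ≤ ℓ h}

/-- The complex cone `𝒞_ℂ = ℂ_* ⋅ (𝒞_ℝ + i 𝒞_ℝ)`. -/
def complexCone (S : Set (B →L[ℝ] ℝ)) : Set (B × B) :=
  {p | ∃ z : ℂ, z ≠ 0 ∧ ∃ x ∈ realCone S, ∃ y ∈ realCone S, p = cSmul z (x, y)}

/-- A map `B × B → ℂ` is a (continuous) complex-linear functional for the complex
structure `cSmul`. -/
def IsCLinearFunctional (ℓ : B × B → ℂ) : Prop :=
  (∀ p q : B × B, ℓ (p + q) = ℓ p + ℓ q) ∧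
  (∀ (z : ℂ) (p : B × B), ℓ (cSmul z p) = z * ℓ p) ∧
  Continuous ℓ

/-- The dual real cone `𝒞'_ℝ = {ℓ ∈ B'_ℝ : ℓ(h) ≥ 0 for all h ∈ 𝒞_ℝ}`. -/
def dualRealCone (S : Set (B →L[ℝ] ℝ)) : Set (B →L[ℝ] ℝ) :=
  {ℓ | ∀ h ∈ realCone S, 0 ≤ ℓ h}

/-- The dual complex cone `𝒞'_ℂ = {ℓ ∈ B'_ℂ : ℓ(h) ≠ 0 for all h ∈ 𝒞_ℂ}`. -/
def dualComplexCone (S : Set (B →L[ℝ] ℝ)) : Set (B × B → ℂ) :=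
  {ℓ | IsCLinearFunctional ℓ ∧ ∀ h ∈ complexCone S, ℓ h ≠ 0}

/-- The action of a real functional on the complexification: `ℓ(x+iy) = ℓ(x) + iℓ(y)`. -/
noncomputable def cext (ℓ : B →L[ℝ] ℝ) (p : B × B) : ℂ :=
  (ℓ p.1 : ℂ) + (ℓ p.2 : ℂ) * Complex.I

/-- `𝒞̊'_ℝ = {ℓ ∈ 𝒞'_ℝ : ℓ(x) > 0 for all x ∈ 𝒞_ℝ}`. -/
def interiorDualRealCone (S : Set (B →L[ℝ] ℝ)) : Set (B →L[ℝ] ℝ) :=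
  {ℓ | ℓ ∈ dualRealCone S ∧ ∀ x ∈ realCone S, 0 < ℓ x}

/-- `Ĉ'_ℂ = {±ℓ ± ip : ℓ, p ∈ 𝒞̊'_ℝ}`. -/
def hatDualComplexCone (S : Set (B →L[ℝ] ℝ)) : Set (B × B → ℂ) :=
  {q | ∃ ℓ ∈ interiorDualRealCone S, ∃ p ∈ interiorDualRealCone S,
    ∃ ε₁ ∈ ({1, -1} : Set ℝ), ∃ ε₂ ∈ ({1, -1} : Set ℝ),
      q = fun v => (ε₁ : ℂ) * cext ℓ v + (ε₂ : ℂ) * Complex.I * cext p v}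

/-- `E_𝒞(h,g) = {ℓ(h)/ℓ(g) : ℓ ∈ 𝒞'_ℂ}`. -/
def gaugeSet (S : Set (B →L[ℝ] ℝ)) (h g : B × B) : Set ℂ :=
  {z | ∃ ℓ ∈ dualComplexCone S, z = ℓ h / ℓ g}

/-- The projective gauge
`δ_𝒞(h,g) = ln( sup_{z∈E_𝒞(h,g)} |z| / inf_{z∈E_𝒞(h,g)} |z| ) = sup_{z,w∈E_𝒞(h,g)} ln|z/w|`,
valued in `[0,∞]`. -/
noncomputable def deltaGauge (S : Set (B →L[ℝ] ℝ)) (h g : B × B) : ℝ≥0∞ :=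
  ⨆ z ∈ gaugeSet S h g, ⨆ w ∈ gaugeSet S h g, ENNReal.ofReal (Real.log (‖z‖ / ‖w‖))

/-- The real/complex cone setup: a separating family `S` of functionals, an order unit `𝕖`
whose cone norm is the norm of `B`, and a functional `𝕞` in the weak-* closed convex hull
of `ℝ₊ ⋅ S` dominating the norm on the cone. -/
structure Setup (B : Type*) [NormedAddCommGroup B] [NormedSpace ℝ B] where
  S : Set (B →L[ℝ] ℝ)
  e : B
  mm : B →L[ℝ] ℝ
  κ : ℝ
  separating : ∀ x : B, (∀ ℓ ∈ S, ℓ x = 0) → x = 0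
  e_mem : e ∈ realCone S
  arch : ∀ h : B, ∃ l : ℝ, 0 ≤ l ∧ ∀ ℓ ∈ S, 0 ≤ ℓ (l • e - h)
  norm_eq : ∀ h : B,
    ‖h‖ = sInf {l : ℝ | 0 ≤ l ∧ ∀ ℓ ∈ S, 0 ≤ ℓ (l • e - h) ∧ 0 ≤ ℓ (l • e + h)}
  κ_pos : 0 < κ
  κ_lt_one : κ < 1
  mm_e : mm e = 1
  mm_lower : ∀ h ∈ realCone S, κ * ‖h‖ ≤ mm h
  mm_star : (⇑mm : B → ℝ) ∈ closure ((fun ℓ : B →L[ℝ] ℝ => (⇑ℓ : B → ℝ)) ''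
    convexHull ℝ {q : B →L[ℝ] ℝ | ∃ c : ℝ, 0 ≤ c ∧ ∃ ℓ ∈ S, q = c • ℓ})

/-- A map between complexifications is a (continuous) complex-linear operator for the
complex structures `cSmul`. -/
def IsCLinearMap {B₁ B₂ : Type*} [NormedAddCommGroup B₁] [NormedSpace ℝ B₁]
    [NormedAddCommGroup B₂] [NormedSpace ℝ B₂]
    (L : B₁ × B₁ → B₂ × B₂) : Prop :=
  (∀ p q, L (p + q) = L p + L q) ∧
  (∀ (z : ℂ) (p), L (cSmul z p) = cSmul z (L p)) ∧
  Continuous L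

lemma cSmul_cSmul (z w : ℂ) (p : B × B) : cSmul z (cSmul w p) = cSmul (z * w) p := by
  unfold cSmul
  refine Prod.ext ?_ ?_ <;>
    simp only [mul_re, mul_im, smul_sub, smul_add, smul_smul, sub_smul, add_smul] <;> abel

lemma cSmul_one (p : B × B) : cSmul 1 p = p := by
  simp [cSmul]

@[simp]
lemma re_cext (ℓ : B →L[ℝ] ℝ) (p : B × B) : (cext ℓ p).re = ℓ p.1 := by
  simp [cext]

@[simp]
lemma im_cext (ℓ : B →L[ℝ] ℝ) (p : B × B) : (cext ℓ p).im = ℓ p.2 := by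
  simp [cext]

lemma cext_zero (ℓ : B →L[ℝ] ℝ) : cext ℓ 0 = 0 := by
  simp [cext]

lemma cext_add (ℓ : B →L[ℝ] ℝ) (p q : B × B) : cext ℓ (p + q) = cext ℓ p + cext ℓ q := by
  simp only [cext, Prod.fst_add, Prod.snd_add, map_add, Complex.ofReal_add]
  ring

lemma cext_cSmul (ℓ : B →L[ℝ] ℝ) (z : ℂ) (p : B × B) : cext ℓ (cSmul z p) = z * cext ℓ p := by
  apply Complex.ext <;> simp [cSmul, mul_re, mul_im]

lemma continuous_cext (ℓ : B →L[ℝ] ℝ) : Continuous (cext ℓ) := by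
  unfold cext
  fun_prop

lemma cext_add_left (ℓ ℓ' : B →L[ℝ] ℝ) (p : B × B) :
    cext (ℓ + ℓ') p = cext ℓ p + cext ℓ' p := by
  simp only [cext, add_apply, Complex.ofReal_add]
  ring

lemma cext_smul_left (c : ℝ) (ℓ : B →L[ℝ] ℝ) (p : B × B) :
    cext (c • ℓ) p = c * cext ℓ p := by
  simp only [cext, smul_apply, smul_eq_mul, Complex.ofReal_mul]
  ring

lemma IsCLinearFunctional.map_sub_cSmul {ℓ : B × B → ℂ} (hℓ : IsCLinearFunctional ℓ)
    (h g : B × B) (ζ : ℂ) : ℓ (h - cSmul ζ g) = ℓ h - ζ * ℓ g := by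
  rw [← hℓ.2.1]
  exact map_sub (AddMonoidHom.mk' ℓ hℓ.1) h (cSmul ζ g)

lemma IsCLinearFunctional.comp {B' : Type*} [NormedAddCommGroup B'] [NormedSpace ℝ B']
    {ℓ : B' × B' → ℂ} (hℓ : IsCLinearFunctional ℓ) {L : B × B → B' × B'} (hL : IsCLinearMap L) :
    IsCLinearFunctional (fun p => ℓ (L p)) :=
  ⟨fun p q => by simp only [hL.1, hℓ.1], fun z p => by simp only [hL.2.1, hℓ.2.1],
    hℓ.2.2.comp hL.2.2⟩

lemma cSmul_mem_complexCone {S : Set (B →L[ℝ] ℝ)} {c : ℂ} (hc : c ≠ 0) {v : B × B}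
    (hv : v ∈ complexCone S) : cSmul c v ∈ complexCone S := by
  obtain ⟨z, hz, x, hx, y, hy, rfl⟩ := hv
  exact ⟨c * z, mul_ne_zero hc hz, x, hx, y, hy, cSmul_cSmul c z (x, y)⟩

lemma mk_mem_complexCone {S : Set (B →L[ℝ] ℝ)} {x y : B} (hxy : (x, y) ≠ 0)
    (hx : ∀ ℓ ∈ S, 0 ≤ ℓ x) (hy : ∀ ℓ ∈ S, 0 ≤ ℓ y) : (x, y) ∈ complexCone S := by
  by_cases hx0 : x = 0
  · have hy0 : y ≠ 0 := fun hy0 => hxy (by simp [hx0, hy0])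
    refine ⟨⟨1 / 2, 1 / 2⟩, by simp [Complex.ext_iff], y, ⟨hy0, hy⟩, y, ⟨hy0, hy⟩, ?_⟩
    ext <;> simp only [cSmul, hx0] <;> module
  by_cases hy0 : y = 0
  · refine ⟨⟨1 / 2, -1 / 2⟩, by simp [Complex.ext_iff], x, ⟨hx0, hx⟩, x, ⟨hx0, hx⟩, ?_⟩
    ext <;> simp only [cSmul, hy0] <;> module
  · exact ⟨1, one_ne_zero, x, ⟨hx0, hx⟩, y, ⟨hy0, hy⟩, (cSmul_one _).symm⟩

section DualCones

variable {S : Set (B →L[ℝ] ℝ)}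

lemma mem_dualRealCone_of_mem {ℓ : B →L[ℝ] ℝ} (hℓ : ℓ ∈ S) : ℓ ∈ dualRealCone S :=
  fun _ hh => hh.2 ℓ hℓ

lemma Setup.mm_mem_interiorDualRealCone (st : Setup B) : st.mm ∈ interiorDualRealCone st.S := by
  have hpos : ∀ h ∈ realCone st.S, 0 < st.mm h := fun h hh =>
    lt_of_lt_of_le (mul_pos st.κ_pos (norm_pos_iff.mpr hh.1)) (st.mm_lower h hh)
  exact ⟨fun h hh => (hpos h hh).le, hpos⟩

lemma smul_mem_interiorDualRealCone {c : ℝ} (hc : 0 < c) {ℓ : B →L[ℝ] ℝ}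
    (hℓ : ℓ ∈ interiorDualRealCone S) : c • ℓ ∈ interiorDualRealCone S :=
  ⟨fun h hh => mul_nonneg hc.le (hℓ.1 h hh), fun x hx => mul_pos hc (hℓ.2 x hx)⟩

lemma add_mem_interiorDualRealCone {ℓ p : B →L[ℝ] ℝ} (hℓ : ℓ ∈ dualRealCone S)
    (hp : p ∈ interiorDualRealCone S) : ℓ + p ∈ interiorDualRealCone S :=
  ⟨fun h hh => add_nonneg (hℓ h hh) (hp.1 h hh),
    fun x hx => add_pos_of_nonneg_of_pos (hℓ x hx) (hp.2 x hx)⟩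

lemma hatDualComplexCone_subset_dualComplexCone :
    hatDualComplexCone S ⊆ dualComplexCone S := by
  rintro _ ⟨ℓ, hℓ, p, hp, ε₁, hε₁, ε₂, hε₂, rfl⟩
  refine ⟨⟨fun u u' => ?_, fun z u => ?_, ?_⟩, ?_⟩
  · simp only [cext_add]; ring
  · simp only [cext_cSmul]; ring
  · exact (continuous_const.mul (continuous_cext ℓ)).add
      (continuous_const.mul (continuous_cext p))
  rintro _ ⟨z, hz, x, hx, y, hy, rfl⟩ h0
  simp only [cext_cSmul] at h0
  have h0' : z * ((ε₁ : ℂ) * cext ℓ (x, y) + ε₂ * I * cext p (x, y)) = 0 := by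
    rw [← h0]; ring
  have hq := (mul_eq_zero.mp h0').resolve_left hz
  have hre : ε₁ * ℓ x - ε₂ * p y = 0 := by simpa [cext, ← sub_eq_add_neg] using congrArg re hq
  have him : ε₁ * ℓ y + ε₂ * p x = 0 := by simpa [cext] using congrArg im hq
  have hℓx := hℓ.2 x hx
  have hℓy := hℓ.2 y hy
  have hpx := hp.2 x hx
  have hpy := hp.2 y hy
  rcases hε₁ with rfl | rfl <;> rcases hε₂ with rfl | rfl <;> linarith

end DualCones

lemma abs_arg_sub_arg_le_pi_div_two {x y : ℂ} (hx : x ≠ 0) (hy : y ≠ 0)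
    (hx' : |arg x| ≤ Real.pi / 2) (hy' : |arg y| ≤ Real.pi / 2) (hxy : 0 ≤ (x / y).re) :
    |arg x - arg y| ≤ Real.pi / 2 := by
  have hcos : 0 ≤ Real.cos (arg x - arg y) := by
    have h := Real.cos_nonneg_of_mem_Icc (abs_le.1 (abs_arg_le_pi_div_two_iff.2 hxy))
    rwa [← Real.Angle.cos_coe, arg_div_coe_angle hx hy, ← Real.Angle.coe_sub,
      Real.Angle.cos_coe] at h
  by_contra! hgt
  have hlt : |arg x - arg y| < Real.pi + Real.pi / 2 := by
    linarith [abs_sub (arg x) (arg y), Real.pi_pos]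
  have := Real.cos_neg_of_pi_div_two_lt_of_lt hgt hlt
  rw [Real.cos_abs] at this
  linarith

lemma exists_ne_zero_forall_mul_re_nonneg_im_nonneg {W : Set ℂ} (hW0 : (0 : ℂ) ∉ W)
    (hW : ∀ w₁ ∈ W, ∀ w₂ ∈ W, 0 ≤ (w₁ / w₂).re) :
    ∃ c : ℂ, c ≠ 0 ∧ ∀ w ∈ W, 0 ≤ (c * w).re ∧ 0 ≤ (c * w).im := by
  rcases W.eq_empty_or_nonempty with rfl | ⟨w₀, hw₀⟩
  · exact ⟨1, one_ne_zero, by simp⟩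
  have hne : ∀ w ∈ W, w ≠ 0 := fun w hw h => hW0 (h ▸ hw)
  have hw0 := hne w₀ hw₀
  set φ : ℂ → ℝ := fun w => arg (w / w₀) with hφ_def
  have hφ : ∀ w ∈ W, |φ w| ≤ Real.pi / 2 := fun w hw =>
    abs_arg_le_pi_div_two_iff.2 (hW w hw w₀ hw₀)
  have hφφ : ∀ w₁ ∈ W, ∀ w₂ ∈ W, φ w₁ ≤ φ w₂ + Real.pi / 2 := fun w₁ h₁ w₂ h₂ => by
    have := abs_arg_sub_arg_le_pi_div_two (div_ne_zero (hne w₁ h₁) hw0)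
      (div_ne_zero (hne w₂ h₂) hw0) (hφ w₁ h₁) (hφ w₂ h₂)
      (by rw [div_div_div_cancel_right₀ hw0]; exact hW w₁ h₁ w₂ h₂)
    linarith [(abs_le.1 this).2]
  have hbdd : BddBelow (φ '' W) :=
    ⟨-(Real.pi / 2), by rintro _ ⟨w, hw, rfl⟩; linarith [(abs_le.1 (hφ w hw)).1]⟩
  -- every `φ w` lies in `[θ, θ + π / 2]`, so rotating by `-θ` lands in the first quadrant
  set θ := sInf (φ '' W)
  refine ⟨exp (-(θ : ℂ) * I) / w₀, div_ne_zero (exp_ne_zero _) hw0, fun w hw => ?_⟩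
  have hθw : θ ≤ φ w := csInf_le hbdd ⟨w, hw, rfl⟩
  have hwθ : φ w - Real.pi / 2 ≤ θ :=
    le_csInf ⟨_, w₀, hw₀, rfl⟩ (by rintro _ ⟨w', hw', rfl⟩; linarith [hφφ w hw w' hw'])
  have hpolar : exp (-(θ : ℂ) * I) / w₀ * w = ‖w / w₀‖ * exp ((φ w - θ : ℝ) * I) := by
    calc exp (-(θ : ℂ) * I) / w₀ * w
        = exp (-(θ : ℂ) * I) * (‖w / w₀‖ * exp (arg (w / w₀) * I)) := by
          rw [norm_mul_exp_arg_mul_I]; ring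
      _ = ‖w / w₀‖ * exp ((φ w - θ : ℝ) * I) := by
          rw [mul_left_comm, ← exp_add, hφ_def]; push_cast; ring_nf
  rw [hpolar, re_ofReal_mul, im_ofReal_mul, exp_ofReal_mul_I_re, exp_ofReal_mul_I_im]
  exact ⟨mul_nonneg (norm_nonneg _)
      (Real.cos_nonneg_of_mem_Icc ⟨by linarith [Real.pi_pos], by linarith⟩),
    mul_nonneg (norm_nonneg _)
      (Real.sin_nonneg_of_nonneg_of_le_pi (by linarith) (by linarith [Real.pi_pos]))⟩

section Duality

variable {S : Set (B →L[ℝ] ℝ)} {v : B × B}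

lemma cext_ne_ofReal_mul_I_mul (hv : ∀ q ∈ hatDualComplexCone S, q v ≠ 0)
    {ℓ p : B →L[ℝ] ℝ} (hℓ : ℓ ∈ interiorDualRealCone S) (hp : p ∈ interiorDualRealCone S)
    (t : ℝ) : cext ℓ v ≠ t * I * cext p v := by
  intro heq
  rcases lt_trichotomy t 0 with ht | rfl | ht
  · refine hv _ ⟨ℓ, hℓ, -t • p, smul_mem_interiorDualRealCone (neg_pos.2 ht) hp,
      1, by simp, 1, by simp, rfl⟩ ?_
    simp only [cext_smul_left, heq]
    push_cast
    ring
  · exact hv _ ⟨ℓ, hℓ, ℓ, hℓ, 1, by simp, 1, by simp, rfl⟩ (by simp [heq])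
  · refine hv _ ⟨ℓ, hℓ, t • p, smul_mem_interiorDualRealCone ht hp, 1, by simp, -1, by simp, rfl⟩ ?_
    simp only [cext_smul_left, heq]
    push_cast
    ring

lemma cext_ne_zero (hv : ∀ q ∈ hatDualComplexCone S, q v ≠ 0) {ℓ : B →L[ℝ] ℝ}
    (hℓ : ℓ ∈ interiorDualRealCone S) : cext ℓ v ≠ 0 := by
  simpa using cext_ne_ofReal_mul_I_mul hv hℓ hℓ 0

lemma re_cext_div_cext_nonneg (hv : ∀ q ∈ hatDualComplexCone S, q v ≠ 0)
    {ℓ₁ ℓ₂ : B →L[ℝ] ℝ} (hℓ₁ : ℓ₁ ∈ interiorDualRealCone S) (hℓ₂ : ℓ₂ ∈ interiorDualRealCone S) :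
    0 ≤ (cext ℓ₁ v / cext ℓ₂ v).re := by
  by_contra! hneg
  set u := cext ℓ₁ v / cext ℓ₂ v with hu
  have hw₂ : cext ℓ₂ v ≠ 0 := cext_ne_zero hv hℓ₂
  -- the convex combination `(1 - s) ℓ₁ + s ℓ₂` takes a purely imaginary multiple of `cext ℓ₂ v`
  set s := -u.re / (1 - u.re) with hs
  have hs0 : 0 < s := div_pos (by linarith) (by linarith)
  have hs1 : s < 1 := (div_lt_one (by linarith)).2 (by linarith)
  have hmem : (1 - s) • ℓ₁ + s • ℓ₂ ∈ interiorDualRealCone S :=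
    add_mem_interiorDualRealCone (smul_mem_interiorDualRealCone (by linarith) hℓ₁).1
      (smul_mem_interiorDualRealCone hs0 hℓ₂)
  set ρ : ℂ := (1 - s) * u + s with hρ_def
  have hρ : ρ.re = 0 := by
    have : ρ.re = (1 - s) * u.re + s := by simp [hρ_def]
    rw [this, hs]
    field_simp [show 1 - u.re ≠ 0 by linarith]
    ring
  have hρI : (ρ.im : ℂ) * I = ρ := by
    conv_rhs => rw [← re_add_im ρ, hρ]
    simp
  refine cext_ne_ofReal_mul_I_mul hv hmem hℓ₂ ρ.im ?_
  rw [hρI, cext_add_left, cext_smul_left, cext_smul_left, hρ_def, hu]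
  field_simp
  push_cast
  ring

lemma nonneg_of_forall_interiorDualRealCone_nonneg {m : B →L[ℝ] ℝ}
    (hm : m ∈ interiorDualRealCone S) {x : B} (hx : ∀ ℓ ∈ interiorDualRealCone S, 0 ≤ ℓ x)
    {ℓ : B →L[ℝ] ℝ} (hℓ : ℓ ∈ dualRealCone S) : 0 ≤ ℓ x := by
  have hmx := hx m hm
  refine _root_.le_of_forall_pos_le_add fun ε hε => ?_
  have hpos := hx _ (add_mem_interiorDualRealCone hℓ
    (smul_mem_interiorDualRealCone (c := ε / (m x + 1)) (by positivity) hm))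
  simp only [add_apply, smul_apply, smul_eq_mul] at hpos
  have hsmall : ε / (m x + 1) * m x ≤ ε := by
    rw [div_mul_eq_mul_div, div_le_iff₀ (by positivity)]
    nlinarith
  linarith

theorem mem_complexCone_of_forall_hat_ne_zero {m : B →L[ℝ] ℝ}
    (hm : m ∈ interiorDualRealCone S) (hv : ∀ q ∈ hatDualComplexCone S, q v ≠ 0) :
    v ∈ complexCone S := by
  obtain ⟨c, hc, hquad⟩ := exists_ne_zero_forall_mul_re_nonneg_im_nonneg
    (W := (fun ℓ => cext ℓ v) '' interiorDualRealCone S)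
    (fun ⟨ℓ, hℓ, h0⟩ => cext_ne_zero hv hℓ h0)
    (by rintro _ ⟨ℓ₁, hℓ₁, rfl⟩ _ ⟨ℓ₂, hℓ₂, rfl⟩; exact re_cext_div_cext_nonneg hv hℓ₁ hℓ₂)
  have hcv : ∀ ℓ ∈ interiorDualRealCone S, 0 ≤ ℓ (cSmul c v).1 ∧ 0 ≤ ℓ (cSmul c v).2 :=
    fun ℓ hℓ => by
      rw [← re_cext, ← im_cext, cext_cSmul]
      exact hquad _ ⟨ℓ, hℓ, rfl⟩
  have hne : cSmul c v ≠ 0 := fun h0 => by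
    have := cext_cSmul m c v
    rw [h0, cext_zero] at this
    exact cext_ne_zero hv hm ((mul_eq_zero.1 this.symm).resolve_left hc)
  have hcone : cSmul c v ∈ complexCone S :=
    mk_mem_complexCone hne
      (fun ℓ hℓ => nonneg_of_forall_interiorDualRealCone_nonneg hm (fun ℓ' h => (hcv ℓ' h).1)
        (mem_dualRealCone_of_mem hℓ))
      (fun ℓ hℓ => nonneg_of_forall_interiorDualRealCone_nonneg hm (fun ℓ' h => (hcv ℓ' h).2)
        (mem_dualRealCone_of_mem hℓ))
  simpa [cSmul_cSmul, inv_mul_cancel₀ hc, cSmul_one] using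
    cSmul_mem_complexCone (inv_ne_zero hc) hcone

end Duality

theorem _root_.Real.tanh_pos {x : ℝ} (hx : 0 < x) : 0 < Real.tanh x := by
  rw [Real.tanh_eq_sinh_div_cosh]
  exact div_pos (Real.sinh_pos_iff.2 hx) (Real.cosh_pos x)

theorem _root_.Real.tanh_nonneg {x : ℝ} (hx : 0 ≤ x) : 0 ≤ Real.tanh x := by
  rw [Real.tanh_eq_sinh_div_cosh]
  exact div_nonneg (Real.sinh_nonneg_iff.2 hx) (Real.cosh_pos x).le

theorem _root_.Real.tanh_eq_exp_two_mul (x : ℝ) :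
    Real.tanh x = (Real.exp (2 * x) - 1) / (Real.exp (2 * x) + 1) := by
  rw [Real.tanh_eq, two_mul, Real.exp_add, Real.exp_neg]
  field_simp

theorem _root_.Real.artanh_mul_le {c t : ℝ} (hc0 : 0 ≤ c) (hc1 : c ≤ 1) (ht0 : 0 ≤ t)
    (ht1 : t < 1) : Real.artanh (c * t) ≤ c * Real.artanh t := by
  have hct : c * t < 1 := lt_of_le_of_lt (mul_le_of_le_one_left ht0 hc1) ht1
  have two_artanh : ∀ x : ℝ, 0 ≤ x → x < 1 →
      2 * Real.artanh x = Real.log (1 + x) - Real.log (1 - x) := fun x h0 h1 => by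
    rw [Real.artanh_eq_half_log ⟨by linarith, h1.le⟩, Real.log_div (by linarith) (by linarith)]
    ring
  have hseries := hasSum_le (fun k => ?_)
    (Real.hasSum_log_sub_log_of_abs_lt_one (x := c * t)
      (by rwa [abs_of_nonneg (mul_nonneg hc0 ht0)]))
    ((Real.hasSum_log_sub_log_of_abs_lt_one (x := t) (by rwa [abs_of_nonneg ht0])).mul_left c)
  · rw [← two_artanh _ (mul_nonneg hc0 ht0) hct, ← two_artanh t ht0 ht1] at hseries
    linarith
  · have hck : c ^ (2 * k + 1) ≤ c := pow_le_of_le_one hc0 hc1 (by omega)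
    calc (2 : ℝ) * (1 / (2 * k + 1)) * (c * t) ^ (2 * k + 1)
        = 2 * (1 / (2 * k + 1)) * (c ^ (2 * k + 1) * t ^ (2 * k + 1)) := by rw [mul_pow]
      _ ≤ 2 * (1 / (2 * k + 1)) * (c * t ^ (2 * k + 1)) := by gcongr
      _ = c * (2 * (1 / (2 * k + 1)) * t ^ (2 * k + 1)) := by ring

lemma mul_sq_le_mul_sq_of_crossRatio_le {α β P Q m : ℝ} (hαQ : α ^ 2 ≤ Q) (hQP : Q ≤ P)
    (hPβ : P < β ^ 2) (hm : 1 ≤ m)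
    (hcr : (P - α ^ 2) * (β ^ 2 - Q) ≤ m ^ 2 * ((Q - α ^ 2) * (β ^ 2 - P))) :
    P * (β + α * m) ^ 2 ≤ Q * (α + β * m) ^ 2 := by
  by_contra! hlt
  have hid : ((P - α ^ 2) * (β ^ 2 - Q) - m ^ 2 * ((Q - α ^ 2) * (β ^ 2 - P))) * (β + α * m) ^ 2 =
      (m ^ 2 - 1) * ((α + β * m) * Q - α * β * (β + α * m)) ^ 2 +
        (P * (β + α * m) ^ 2 - Q * (α + β * m) ^ 2) * ((β ^ 2 - Q) + m ^ 2 * (Q - α ^ 2)) := by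
    ring
  have h1 : ((P - α ^ 2) * (β ^ 2 - Q) - m ^ 2 * ((Q - α ^ 2) * (β ^ 2 - P))) *
      (β + α * m) ^ 2 ≤ 0 := mul_nonpos_of_nonpos_of_nonneg (by linarith) (sq_nonneg _)
  have h2 : 0 ≤ (m ^ 2 - 1) * ((α + β * m) * Q - α * β * (β + α * m)) ^ 2 :=
    mul_nonneg (by nlinarith) (sq_nonneg _)
  have h3 : 0 < (P * (β + α * m) ^ 2 - Q * (α + β * m) ^ 2) *
      ((β ^ 2 - Q) + m ^ 2 * (Q - α ^ 2)) :=
    mul_pos (by linarith) (by nlinarith)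
  linarith

/-- Birkhoff's contraction estimate on the interval `(a, b)`: the cross-ratio hypothesis says
that the Hilbert distance of `P` and `Q` in `(a, b)` is at most `Θ`. -/
theorem log_div_le_tanh_mul_log_div {a b P Q Θ : ℝ} (ha : 0 < a) (haQ : a < Q) (hQP : Q ≤ P)
    (hPb : P < b) (hΘ : 0 ≤ Θ) (hcr : (P - a) * (b - Q) ≤ Real.exp Θ * ((Q - a) * (b - P))) :
    Real.log (P / Q) ≤ Real.tanh (Θ / 4) * Real.log (b / a) := by
  set m := Real.exp (Θ / 2) with hm_def
  set α := √a
  set β := √b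
  have hm : 1 ≤ m := Real.one_le_exp (by positivity)
  have hα : 0 < α := Real.sqrt_pos.2 ha
  have hαβ : α < β := Real.sqrt_lt_sqrt ha.le (by linarith)
  have hα2 : α ^ 2 = a := Real.sq_sqrt ha.le
  have hβ2 : β ^ 2 = b := Real.sq_sqrt (by linarith)
  set c := Real.tanh (Θ / 4) with hc_def
  set t := (β - α) / (β + α) with ht_def
  have hc : c = (m - 1) / (m + 1) := by
    rw [hc_def, Real.tanh_eq_exp_two_mul, hm_def]
    ring_nf
  have hc0 : 0 ≤ c := Real.tanh_nonneg (by positivity)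
  have hc1 : c ≤ 1 := (Real.tanh_lt_one _).le
  have ht0 : 0 ≤ t := div_nonneg (by linarith) (by linarith)
  have ht1 : t < 1 := (div_lt_one (by linarith)).2 (by linarith)
  have hct : c * t < 1 := lt_of_le_of_lt (mul_le_of_le_one_left ht0 hc1) ht1
  have hPQ : P * (β + α * m) ^ 2 ≤ Q * (α + β * m) ^ 2 := by
    refine mul_sq_le_mul_sq_of_crossRatio_le (by linarith) hQP (by linarith) hm ?_
    rwa [hα2, hβ2, hm_def, ← Real.exp_nat_mul, Nat.cast_ofNat, mul_div_cancel₀ _ two_ne_zero]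
  have hN : 2 * Real.artanh (c * t) = Real.log ((α + β * m) / (β + α * m)) := by
    have hratio : (1 + c * t) / (1 - c * t) = (α + β * m) / (β + α * m) := by
      have hm1 : m + 1 ≠ 0 := by positivity
      have hβα : β + α ≠ 0 := by positivity
      have hden : (m + 1) * (β + α) ≠ 0 := mul_ne_zero hm1 hβα
      have h1 : 1 + c * t = 2 * (α + β * m) / ((m + 1) * (β + α)) := by
        rw [hc, ht_def]; field_simp; ring
      have h2 : 1 - c * t = 2 * (β + α * m) / ((m + 1) * (β + α)) := by
        rw [hc, ht_def]; field_simp; ring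
      rw [h1, h2, div_div_div_cancel_right₀ hden, mul_div_mul_left _ _ two_ne_zero]
    rw [Real.artanh_eq_half_log ⟨by nlinarith, hct.le⟩, hratio]
    ring
  have hβα : 2 * Real.artanh t = Real.log (β / α) := by
    have hratio : (1 + t) / (1 - t) = β / α := by
      have hden : β + α ≠ 0 := by positivity
      have h1 : 1 + t = 2 * β / (β + α) := by rw [ht_def]; field_simp; ring
      have h2 : 1 - t = 2 * α / (β + α) := by rw [ht_def]; field_simp; ring
      rw [h1, h2, div_div_div_cancel_right₀ hden, mul_div_mul_left _ _ two_ne_zero]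
    rw [Real.artanh_eq_half_log ⟨by linarith, ht1.le⟩, hratio]
    ring
  calc Real.log (P / Q)
      ≤ Real.log (((α + β * m) / (β + α * m)) ^ 2) := by
        refine Real.log_le_log (div_pos (by linarith) (by linarith)) ?_
        rw [div_pow, div_le_div_iff₀ (by linarith) (by positivity)]
        linarith
    _ = 4 * Real.artanh (c * t) := by rw [Real.log_pow, ← hN]; ring
    _ ≤ 4 * (c * Real.artanh t) := by gcongr; exact Real.artanh_mul_le hc0 hc1 ht0 ht1
    _ = c * Real.log (b / a) := by rw [← hα2, ← hβ2, ← div_pow, Real.log_pow, ← hβα]; ring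

lemma norm_ofReal_div_norm_mul {r : ℝ} (hr : 0 ≤ r) {u : ℂ} (hu : u ≠ 0) :
    ‖((r / ‖u‖ : ℝ) : ℂ) * u‖ = r := by
  rw [norm_mul, norm_real, Real.norm_of_nonneg (by positivity),
    div_mul_cancel₀ _ (norm_ne_zero_iff.2 hu)]

lemma norm_sub_ofReal_div_norm_mul (r : ℝ) {u : ℂ} (hu : u ≠ 0) :
    ‖u - ((r / ‖u‖ : ℝ) : ℂ) * u‖ = |‖u‖ - r| := by
  have hu' : ‖u‖ ≠ 0 := norm_ne_zero_iff.2 hu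
  rw [show u - ((r / ‖u‖ : ℝ) : ℂ) * u = ((1 - r / ‖u‖ : ℝ) : ℂ) * u by push_cast; ring,
    norm_mul, norm_real, Real.norm_eq_abs, show ‖u‖ - r = (1 - r / ‖u‖) * ‖u‖ by field_simp,
    abs_mul, abs_norm]

theorem log_norm_div_le_of_log_crossRatio_le {z w : ℂ} {a b Θ : ℝ} (ha : 0 < a)
    (haw : a < ‖w‖) (hwz : ‖w‖ ≤ ‖z‖) (hzb : ‖z‖ < b) (hΘ : 0 ≤ Θ)
    (hcr : Real.log (‖(z - ((a / ‖w‖ : ℝ) : ℂ) * w) / (z - ((b / ‖z‖ : ℝ) : ℂ) * z)‖ /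
      ‖(w - ((a / ‖w‖ : ℝ) : ℂ) * w) / (w - ((b / ‖z‖ : ℝ) : ℂ) * z)‖) ≤ Θ) :
    Real.log (‖z‖ / ‖w‖) ≤ Real.tanh (Θ / 4) * Real.log (b / a) := by
  set ζ₁ : ℂ := ((a / ‖w‖ : ℝ) : ℂ) * w
  set ζ₂ : ℂ := ((b / ‖z‖ : ℝ) : ℂ) * z
  have hw0 : w ≠ 0 := norm_pos_iff.1 (ha.trans haw)
  have hz0 : z ≠ 0 := norm_pos_iff.1 ((ha.trans haw).trans_le hwz)
  have hwζ₁ : ‖w - ζ₁‖ = ‖w‖ - a := by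
    rw [norm_sub_ofReal_div_norm_mul a hw0, abs_of_pos (by linarith)]
  have hzζ₂ : ‖z - ζ₂‖ = b - ‖z‖ := by
    rw [norm_sub_ofReal_div_norm_mul b hz0, abs_of_neg (by linarith), neg_sub]
  have hζ₁ : ‖ζ₁‖ = a := norm_ofReal_div_norm_mul ha.le hw0
  have hζ₂ : ‖ζ₂‖ = b := norm_ofReal_div_norm_mul (by linarith) hz0
  have hzζ₁ : ‖z‖ - a ≤ ‖z - ζ₁‖ := hζ₁ ▸ norm_sub_norm_le z ζ₁
  have hwζ₂ : b - ‖w‖ ≤ ‖w - ζ₂‖ := hζ₂ ▸ norm_sub_rev w ζ₂ ▸ norm_sub_norm_le ζ₂ w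
  refine log_div_le_tanh_mul_log_div ha haw hwz hzb hΘ ?_
  rw [norm_div, norm_div, hwζ₁, hzζ₂, div_div_div_eq] at hcr
  have hcr' := (Real.log_le_iff_le_exp (by
    have : 0 < ‖z - ζ₁‖ := by linarith
    have : 0 < ‖w - ζ₂‖ := by linarith
    have : 0 < b - ‖z‖ := by linarith
    have : 0 < ‖w‖ - a := by linarith
    positivity)).1 hcr
  rw [div_le_iff₀ (mul_pos (by linarith) (by linarith))] at hcr'
  calc (‖z‖ - a) * (b - ‖w‖) ≤ ‖z - ζ₁‖ * ‖w - ζ₂‖ :=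
        mul_le_mul hzζ₁ hwζ₂ (by linarith) (norm_nonneg _)
    _ ≤ Real.exp Θ * ((‖w‖ - a) * (b - ‖z‖)) := by linarith [mul_comm (b - ‖z‖) (‖w‖ - a)]

lemma exists_pos_forall_le_norm_le_exp_mul {E : Set ℂ} {z : ℂ} {d : ℝ} (hz : z ∈ E)
    (hE0 : (0 : ℂ) ∉ E) (hd : ∀ u ∈ E, ∀ u' ∈ E, Real.log (‖u‖ / ‖u'‖) ≤ d) :
    ∃ a > 0, ∀ u ∈ E, a ≤ ‖u‖ ∧ ‖u‖ ≤ Real.exp d * a := by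
  have hpos : ∀ u ∈ E, 0 < ‖u‖ := fun u hu => norm_pos_iff.2 fun h => hE0 (h ▸ hu)
  have hle : ∀ u ∈ E, ∀ u' ∈ E, ‖u‖ ≤ Real.exp d * ‖u'‖ := fun u hu u' hu' => by
    exact (div_le_iff₀ (hpos u' hu')).1
      ((Real.log_le_iff_le_exp (div_pos (hpos u hu) (hpos u' hu'))).1 (hd u hu u' hu'))
  have hbdd : BddBelow (norm '' E) := ⟨0, by rintro _ ⟨u, hu, rfl⟩; exact (hpos u hu).le⟩
  have hne : (norm '' E).Nonempty := ⟨_, z, hz, rfl⟩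
  refine ⟨sInf (norm '' E), ?_, fun u hu => ⟨csInf_le hbdd ⟨u, hu, rfl⟩, ?_⟩⟩
  · refine lt_of_lt_of_le (div_pos (hpos z hz) (Real.exp_pos d)) (le_csInf hne ?_)
    rintro _ ⟨u, hu, rfl⟩
    rw [div_le_iff₀' (Real.exp_pos d)]
    exact hle z hz u hu
  · rw [← div_le_iff₀' (Real.exp_pos d)]
    refine le_csInf hne ?_
    rintro _ ⟨u', hu', rfl⟩
    rw [div_le_iff₀' (Real.exp_pos d)]
    exact hle u hu u' hu'

theorem log_norm_div_le_tanh_mul {E : Set ℂ} {z w : ℂ} {d Θ : ℝ} (hz : z ∈ E) (hw : w ∈ E)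
    (hE0 : (0 : ℂ) ∉ E) (hd : ∀ u ∈ E, ∀ u' ∈ E, Real.log (‖u‖ / ‖u'‖) ≤ d) (hΘ : 0 ≤ Θ)
    (hcr : ∀ ζ₁ ∉ E, ∀ ζ₂ ∉ E,
      Real.log (‖(z - ζ₁) / (z - ζ₂)‖ / ‖(w - ζ₁) / (w - ζ₂)‖) ≤ Θ) :
    Real.log (‖z‖ / ‖w‖) ≤ Real.tanh (Θ / 4) * d := by
  have htanh : 0 ≤ Real.tanh (Θ / 4) := Real.tanh_nonneg (by positivity)
  have hw0 : w ≠ 0 := fun h => hE0 (h ▸ hw)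
  have hz0 : z ≠ 0 := fun h => hE0 (h ▸ hz)
  rcases le_or_gt ‖z‖ ‖w‖ with hzw | hwz
  · have hd0 : 0 ≤ d := by
      simpa [div_self (norm_ne_zero_iff.2 hz0)] using hd z hz z hz
    exact (Real.log_nonpos (by positivity) ((div_le_one (norm_pos_iff.2 hw0)).2 hzw)).trans
      (mul_nonneg htanh hd0)
  obtain ⟨a, ha, hE⟩ := exists_pos_forall_le_norm_le_exp_mul hz hE0 hd
  refine _root_.le_of_forall_pos_le_add fun ε hε => ?_
  -- radii just outside the annulus `a ≤ ‖u‖ ≤ exp d * a` around `E`, with `b' / a' = exp (d + ε)`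
  set a' := a * Real.exp (-(ε / 2)) with ha'_def
  set b' := a' * Real.exp (d + ε) with hb'_def
  have ha' : 0 < a' := by positivity
  have hb' : 0 < b' := by positivity
  have ha'a : a' < a := mul_lt_of_lt_one_right ha (Real.exp_lt_one_iff.2 (by linarith))
  have hbb' : Real.exp d * a < b' := by
    rw [hb'_def, ha'_def, mul_assoc, ← Real.exp_add, mul_comm]
    exact mul_lt_mul_of_pos_left (Real.exp_lt_exp.2 (by linarith)) ha
  have hζ₁ : ((a' / ‖w‖ : ℝ) : ℂ) * w ∉ E := fun h => by
    linarith [(hE _ h).1, norm_ofReal_div_norm_mul ha'.le hw0]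
  have hζ₂ : ((b' / ‖z‖ : ℝ) : ℂ) * z ∉ E := fun h => by
    linarith [(hE _ h).2, norm_ofReal_div_norm_mul hb'.le hz0]
  have key := log_norm_div_le_of_log_crossRatio_le ha' (ha'a.trans_le (hE w hw).1) hwz.le
    ((hE z hz).2.trans_lt hbb') hΘ (hcr _ hζ₁ _ hζ₂)
  rw [hb'_def, mul_div_cancel_left₀ _ ha'.ne', Real.log_exp] at key
  nlinarith [Real.tanh_lt_one (Θ / 4)]

section Gauge

variable {S : Set (B →L[ℝ] ℝ)} {h g : B × B}

lemma ofReal_log_le_deltaGauge {z w : ℂ} (hz : z ∈ gaugeSet S h g) (hw : w ∈ gaugeSet S h g) :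
    ENNReal.ofReal (Real.log (‖z‖ / ‖w‖)) ≤ deltaGauge S h g :=
  le_iSup₂_of_le z hz (le_iSup₂_of_le w hw le_rfl)

lemma log_le_toReal_deltaGauge {z w : ℂ} (hz : z ∈ gaugeSet S h g) (hw : w ∈ gaugeSet S h g)
    (hδ : deltaGauge S h g ≠ ⊤) : Real.log (‖z‖ / ‖w‖) ≤ (deltaGauge S h g).toReal :=
  (ENNReal.ofReal_le_iff_le_toReal hδ).1 (ofReal_log_le_deltaGauge hz hw)

lemma zero_notMem_gaugeSet (hh : h ∈ complexCone S) (hg : g ∈ complexCone S) :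
    (0 : ℂ) ∉ gaugeSet S h g := fun ⟨_, hℓ, h0⟩ =>
  div_ne_zero (hℓ.2 h hh) (hℓ.2 g hg) h0.symm

lemma sub_cSmul_mem_complexCone {m : B →L[ℝ] ℝ} (hm : m ∈ interiorDualRealCone S)
    (hg : g ∈ complexCone S) {ζ : ℂ} (hζ : ζ ∉ gaugeSet S h g) :
    h - cSmul ζ g ∈ complexCone S :=
  mem_complexCone_of_forall_hat_ne_zero hm fun q hq h0 => by
    have hq' := hatDualComplexCone_subset_dualComplexCone hq
    rw [hq'.1.map_sub_cSmul, sub_eq_zero] at h0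
    exact hζ ⟨q, hq', by rw [h0, mul_div_cancel_right₀ _ (hq'.2 g hg)]⟩

end Gauge

section Map

variable {B₁ B₂ : Type*} [NormedAddCommGroup B₁] [NormedSpace ℝ B₁]
  [NormedAddCommGroup B₂] [NormedSpace ℝ B₂] {S₁ : Set (B₁ →L[ℝ] ℝ)} {S₂ : Set (B₂ →L[ℝ] ℝ)}
  {L : B₁ × B₁ → B₂ × B₂}

lemma comp_mem_dualComplexCone (hL : IsCLinearMap L)
    (hLcone : ∀ p ∈ complexCone S₁, L p ∈ complexCone S₂) {ℓ : B₂ × B₂ → ℂ}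
    (hℓ : ℓ ∈ dualComplexCone S₂) : (fun p => ℓ (L p)) ∈ dualComplexCone S₁ :=
  ⟨hℓ.1.comp hL, fun u hu => hℓ.2 _ (hLcone u hu)⟩

lemma gaugeSet_map_subset (hL : IsCLinearMap L)
    (hLcone : ∀ p ∈ complexCone S₁, L p ∈ complexCone S₂) (h g : B₁ × B₁) :
    gaugeSet S₂ (L h) (L g) ⊆ gaugeSet S₁ h g := by
  rintro _ ⟨ℓ, hℓ, rfl⟩
  exact ⟨_, comp_mem_dualComplexCone hL hLcone hℓ, rfl⟩

lemma sub_div_sub_mem_gaugeSet_map (hL : IsCLinearMap L)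
    (hLcone : ∀ p ∈ complexCone S₁, L p ∈ complexCone S₂) {h g : B₁ × B₁}
    (hg : g ∈ complexCone S₁) {z : ℂ} (hz : z ∈ gaugeSet S₂ (L h) (L g)) (ζ₁ ζ₂ : ℂ) :
    (z - ζ₁) / (z - ζ₂) ∈ gaugeSet S₂ (L (h - cSmul ζ₁ g)) (L (h - cSmul ζ₂ g)) := by
  obtain ⟨ℓ, hℓ, rfl⟩ := hz
  have hLg : ℓ (L g) ≠ 0 := hℓ.2 _ (hLcone g hg)
  have hsub : ∀ ζ, ℓ (L (h - cSmul ζ g)) = ℓ (L h) - ζ * ℓ (L g) :=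
    (comp_mem_dualComplexCone hL hLcone hℓ).1.map_sub_cSmul h g
  refine ⟨ℓ, hℓ, ?_⟩
  have hfactor : ∀ ζ, ℓ (L h) - ζ * ℓ (L g) = (ℓ (L h) / ℓ (L g) - ζ) * ℓ (L g) := fun ζ => by
    field_simp
  rw [hsub, hsub, hfactor, hfactor, mul_div_mul_right _ _ hLg]

theorem deltaGauge_map_le_tanh_mul {m : B₁ →L[ℝ] ℝ} (hm : m ∈ interiorDualRealCone S₁)
    (hL : IsCLinearMap L) (hLcone : ∀ p ∈ complexCone S₁, L p ∈ complexCone S₂) {Θ : ℝ}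
    (hΘ : 0 ≤ Θ) (hΔ : ∀ x ∈ complexCone S₁, ∀ y ∈ complexCone S₁,
      deltaGauge S₂ (L x) (L y) ≤ ENNReal.ofReal Θ)
    {h g : B₁ × B₁} (hh : h ∈ complexCone S₁) (hg : g ∈ complexCone S₁)
    (hδ : deltaGauge S₁ h g ≠ ⊤) :
    deltaGauge S₂ (L h) (L g) ≤ ENNReal.ofReal (Real.tanh (Θ / 4)) * deltaGauge S₁ h g := by
  refine iSup₂_le fun z hz => iSup₂_le fun w hw => ?_
  rw [← ENNReal.ofReal_toReal hδ, ← ENNReal.ofReal_mul (Real.tanh_nonneg (by positivity))]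
  refine ENNReal.ofReal_le_ofReal (log_norm_div_le_tanh_mul (gaugeSet_map_subset hL hLcone h g hz)
    (gaugeSet_map_subset hL hLcone h g hw) (zero_notMem_gaugeSet hh hg)
    (fun u hu u' hu' => log_le_toReal_deltaGauge hu hu' hδ) hΘ fun ζ₁ hζ₁ ζ₂ hζ₂ => ?_)
  refine (ENNReal.ofReal_le_ofReal_iff hΘ).1 ((ofReal_log_le_deltaGauge
    (sub_div_sub_mem_gaugeSet_map hL hLcone hg hz ζ₁ ζ₂)
    (sub_div_sub_mem_gaugeSet_map hL hLcone hg hw ζ₁ ζ₂)).trans ?_)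
  exact hΔ _ (sub_cSmul_mem_complexCone hm hg hζ₁) _ (sub_cSmul_mem_complexCone hm hg hζ₂)

end Map

theorem complex_cone_contraction_general {B₁ B₂ : Type*}
    [NormedAddCommGroup B₁] [NormedSpace ℝ B₁]
    [NormedAddCommGroup B₂] [NormedSpace ℝ B₂]
    (st₁ : Setup B₁) (st₂ : Setup B₂)
    (L : B₁ × B₁ → B₂ × B₂) (hL : IsCLinearMap L)
    (hLcone : ∀ p ∈ complexCone st₁.S, L p ∈ complexCone st₂.S)
    (Δ : ℝ≥0∞)
    (hΔdef : Δ = ⨆ x ∈ complexCone st₁.S, ⨆ y ∈ complexCone st₁.S,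
      deltaGauge st₂.S (L x) (L y))
    (hΔfin : Δ ≠ ⊤) :
    ∀ h ∈ complexCone st₁.S, ∀ g ∈ complexCone st₁.S,
      deltaGauge st₂.S (L h) (L g) ≤
        ENNReal.ofReal (Real.tanh (Δ.toReal / 4)) * deltaGauge st₁.S h g := by
  intro h hh g hg
  have hΔ : ∀ x ∈ complexCone st₁.S, ∀ y ∈ complexCone st₁.S,
      deltaGauge st₂.S (L x) (L y) ≤ Δ := by
    rw [hΔdef]
    exact fun x hx y hy => le_iSup₂_of_le x hx (le_iSup₂_of_le y hy le_rfl)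
  rcases ne_or_eq (deltaGauge st₁.S h g) ⊤ with htop | htop
  · refine deltaGauge_map_le_tanh_mul st₁.mm_mem_interiorDualRealCone hL hLcone
      ENNReal.toReal_nonneg ?_ hh hg htop
    rwa [ENNReal.ofReal_toReal hΔfin]
  rcases eq_or_ne Δ 0 with hΔ0 | hΔ0
  · exact (hΔ h hh g hg).trans (hΔ0.le.trans zero_le)
  have htanh : 0 < Real.tanh (Δ.toReal / 4) :=
    Real.tanh_pos (by have := ENNReal.toReal_pos hΔ0 hΔfin; positivity)
  rw [htop, ENNReal.mul_top (ENNReal.ofReal_pos.2 htanh).ne']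
  exact le_top

/-- **Theorem 5.16 (complex cone contraction).** If a bounded complex-linear operator
`L` maps `𝒞₁` into `𝒞₂` and `Δ = sup_{x,y∈𝒞₁} δ_{𝒞₂}(Lx, Ly) < ∞`, then for all
`h, g ∈ 𝒞₁`, `δ_{𝒞₂}(Lh, Lg) ≤ tanh(Δ/4) δ_{𝒞₁}(h, g)`. -/
theorem complex_cone_contraction {B₁ B₂ : Type*}
    [NormedAddCommGroup B₁] [NormedSpace ℝ B₁] [CompleteSpace B₁]
    [NormedAddCommGroup B₂] [NormedSpace ℝ B₂] [CompleteSpace B₂]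
    (st₁ : Setup B₁) (st₂ : Setup B₂)
    (L : B₁ × B₁ → B₂ × B₂) (hL : IsCLinearMap L)
    (hLcone : ∀ p ∈ complexCone st₁.S, L p ∈ complexCone st₂.S)
    (Δ : ℝ≥0∞)
    (hΔdef : Δ = ⨆ x ∈ complexCone st₁.S, ⨆ y ∈ complexCone st₁.S,
      deltaGauge st₂.S (L x) (L y))
    (hΔfin : Δ ≠ ⊤) :
    ∀ h ∈ complexCone st₁.S, ∀ g ∈ complexCone st₁.S,
      deltaGauge st₂.S (L h) (L g) ≤
        ENNReal.ofReal (Real.tanh (Δ.toReal / 4)) * deltaGauge st₁.S h g :=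
  complex_cone_contraction_general st₁ st₂ L hL hLcone Δ hΔdef hΔfin

end ConeSetup
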